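/- arXiv:1505.00885 — 3 statements merged into one kernel-verified Lean document; each statement's English description precedes it below -/
import Mathlib

section
/- Under the hypotheses of the Lax equation dA/dt + [A,B] = 0, the characteristic polynomial of A(t) is independent of t; in particular every coefficient of det(y·I − A(t)) as a polynomial in y is a conserved quantity. -/
/-!
By Jacobi's formula, `d/dt det (x - A) = tr (adj (x - A) · [A, B])` for every scalar `x`. The
adjugate of `x - A` commutes with `x - A`, hence with `A`, and `tr (P [A, B]) = tr ([P, A] B)`
vanishes for every `P` commuting with `A`. So each value `χ_{A(t)}(x) = det (x - A(t))` is
constant in `t`, and a complex polynomial is determined by its values.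
-/

open Matrix

namespace Matrix

variable {n : Type*} [Fintype n]

section Algebra

variable {R : Type*} [CommRing R]

theorem trace_mul_commutator_eq_zero {P A : Matrix n n R} (h : Commute P A) (B : Matrix n n R) :
    trace (P * (A * B - B * A)) = 0 := by
  rw [mul_sub, trace_sub, ← mul_assoc, h.eq, mul_assoc, trace_mul_comm A, mul_assoc, sub_self]

variable [DecidableEq n]

theorem sum_det_updateRow (M N : Matrix n n R) :
    ∑ i, (M.updateRow i (N i)).det = trace (adjugate M * N) := by
  simp only [← cramer_transpose_apply, cramer_eq_adjugate_mulVec, ← adjugate_transpose, mulVec,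
    dotProduct, transpose_apply, trace, diag, mul_apply]
  exact Finset.sum_comm

theorem commute_adjugate_self (M : Matrix n n R) : Commute (adjugate M) M := by
  rw [Commute, SemiconjBy, adjugate_mul, mul_adjugate]

theorem commute_adjugate_scalar_sub (x : R) (A : Matrix n n R) :
    Commute (adjugate (scalar n x - A)) A := by
  have h := (scalar_commute x (Commute.all x) (adjugate (scalar n x - A))).symm.sub_right
    (commute_adjugate_self (scalar n x - A))
  rwa [sub_sub_cancel] at h

end Algebra

section Calculus

variable [DecidableEq n] (𝕜 R : Type*) [NontriviallyNormedField 𝕜] [NormedCommRing R]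
  [NormedAlgebra 𝕜 R]

def detRowContinuousMultilinear : ContinuousMultilinearMap 𝕜 (fun _ : n => n → R) R where
  toMultilinearMap := (detRowAlternating : (n → R) [⋀^n]→ₗ[R] R).toMultilinearMap.restrictScalars 𝕜
  cont := continuous_id.matrix_det

variable {𝕜 R}

theorem hasDerivAt_det {M : 𝕜 → Matrix n n R} {M' : Matrix n n R} {t : 𝕜}
    (h : ∀ i j, HasDerivAt (fun s => M s i j) (M' i j) t) :
    HasDerivAt (fun s => (M s).det) (trace (adjugate (M t) * M')) t := by
  have hM : HasDerivAt (fun s i j => M s i j) (fun i j => M' i j) t :=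
    hasDerivAt_pi.2 fun i => hasDerivAt_pi.2 (h i)
  have hdet :=
    ((detRowContinuousMultilinear 𝕜 R).hasFDerivAt fun i j => M t i j).comp_hasDerivAt t hM
  rw [ContinuousMultilinearMap.linearDeriv_apply] at hdet
  rw [← sum_det_updateRow]
  exact hdet

theorem hasDerivAt_det_scalar_sub_of_lax {A B : 𝕜 → Matrix n n R} {t : 𝕜}
    (hA : ∀ i j, HasDerivAt (fun s => A s i j) ((B t * A t - A t * B t) i j) t) (x : R) :
    HasDerivAt (fun s => (scalar n x - A s).det) 0 t := by
  have h := hasDerivAt_det (M := fun s => scalar n x - A s)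
    (M' := A t * B t - B t * A t) fun i j => by
      simpa only [sub_apply, neg_sub] using (hA i j).const_sub (scalar n x i j)
  rwa [trace_mul_commutator_eq_zero (commute_adjugate_scalar_sub x (A t))] at h

end Calculus

end Matrix

/-- Along solutions of the Lax equation dA/dt = [B,A], the characteristic
polynomial of A(t) is independent of t. -/
theorem lax_charpoly_conserved (m : ℕ) (A B : ℝ → Matrix (Fin m) (Fin m) ℂ)
    (hA : ∀ t i j, HasDerivAt (fun s => A s i j)
      ((B t * A t - A t * B t) i j) t) :
    ∀ t₁ t₂ : ℝ, Matrix.charpoly (A t₁) = Matrix.charpoly (A t₂) := by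
  intro t₁ t₂
  refine Polynomial.funext fun x => ?_
  have hderiv t := hasDerivAt_det_scalar_sub_of_lax (hA t) x
  simp only [eval_charpoly]
  exact is_const_of_deriv_eq_zero (fun t => (hderiv t).differentiableAt)
    (fun t => (hderiv t).deriv) t₁ t₂
end

section
/- Define the autonomous matrix first Painlevé Hamiltonian on ℂ⁴ (coordinates q₁, p₁, q₂, p₂) with parameters t, κ ∈ ℂ: H = −2p₂(p₂q₂ − κ) + p₁²/2 − 2q₁t − 2q₁(q₁² − q₂) + 4q₁q₂, and G = q₂·(p₁p₂ + 3q₁² − q₂ + t)² − κ·p₁·(p₁p₂ + 3q₁² − q₂ + t) − 2κ²q₁. Then {G, H} = 0, where {F,G} = Σᵢ (∂F/∂qᵢ · ∂G/∂pᵢ − ∂G/∂qᵢ · ∂F/∂pᵢ). -/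
/-!
Every partial derivative is polynomial; written in terms of
`w = p₁p₂ + 3q₁² − q₂ + t` (so that `G = q₂w² − κp₁w − 2κ²q₁`), the bracket cancels identically.
-/

noncomputable section

namespace MatrixPI

def hamiltonian (t κ : ℂ) (q1 p1 q2 p2 : ℂ) : ℂ :=
  -2 * p2 * (p2 * q2 - κ) + p1 ^ 2 / 2 - 2 * q1 * t
    - 2 * q1 * (q1 ^ 2 - q2) + 4 * q1 * q2

def integral (t κ : ℂ) (q1 p1 q2 p2 : ℂ) : ℂ :=
  q2 * (p1 * p2 + 3 * q1 ^ 2 - q2 + t) ^ 2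
    - κ * p1 * (p1 * p2 + 3 * q1 ^ 2 - q2 + t) - 2 * κ ^ 2 * q1

def poissonBracket (F G : ℂ → ℂ → ℂ → ℂ → ℂ) (q1 p1 q2 p2 : ℂ) : ℂ :=
  deriv (fun z => F z p1 q2 p2) q1 * deriv (fun z => G q1 z q2 p2) p1
    - deriv (fun z => G z p1 q2 p2) q1 * deriv (fun z => F q1 z q2 p2) p1
    + deriv (fun z => F q1 p1 z p2) q2 * deriv (fun z => G q1 p1 q2 z) p2
    - deriv (fun z => G q1 p1 z p2) q2 * deriv (fun z => F q1 p1 q2 z) p2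

variable (t κ q1 p1 q2 p2 : ℂ)

theorem hasDerivAt_hamiltonian_q1 :
    HasDerivAt (fun z => hamiltonian t κ z p1 q2 p2) (-2 * t - 6 * q1 ^ 2 + 6 * q2) q1 := by
  have hq := hasDerivAt_id' q1
  exact ((((hq.const_mul 2).mul_const t).const_sub _).sub ((hq.const_mul 2).mul
    ((hasDerivAt_pow 2 q1).sub_const q2)) |>.add ((hq.const_mul 4).mul_const q2)).congr_deriv
    (by ring)

theorem hasDerivAt_hamiltonian_p1 :
    HasDerivAt (fun z => hamiltonian t κ q1 z q2 p2) p1 p1 :=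
  ((((hasDerivAt_pow 2 p1).div_const 2).const_add _).sub_const _ |>.sub_const _
    |>.add_const _).congr_deriv (by ring)

theorem hasDerivAt_hamiltonian_q2 :
    HasDerivAt (fun z => hamiltonian t κ q1 p1 z p2) (-2 * p2 ^ 2 + 6 * q1) q2 := by
  have hq := hasDerivAt_id' q2
  exact (((((hq.const_mul p2).sub_const κ).const_mul (-2 * p2)).add_const _).sub_const _
    |>.sub ((hq.const_sub (q1 ^ 2)).const_mul (2 * q1)) |>.add (hq.const_mul (4 * q1)))
    |>.congr_deriv (by ring)

theorem hasDerivAt_hamiltonian_p2 :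
    HasDerivAt (fun z => hamiltonian t κ q1 p1 q2 z) (-4 * p2 * q2 + 2 * κ) p2 := by
  have hp := hasDerivAt_id' p2
  exact (((((hp.const_mul (-2)).mul ((hp.mul_const q2).sub_const κ)).add_const _).sub_const _
    |>.sub_const _).add_const _).congr_deriv (by ring)

theorem hasDerivAt_integral_q1 :
    HasDerivAt (fun z => integral t κ z p1 q2 p2)
      (12 * q1 * q2 * (p1 * p2 + 3 * q1 ^ 2 - q2 + t) - 6 * κ * p1 * q1 - 2 * κ ^ 2) q1 := by
  have hw : HasDerivAt (fun z => p1 * p2 + 3 * z ^ 2 - q2 + t) (6 * q1) q1 :=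
    (((hasDerivAt_pow 2 q1).const_mul 3).const_add _ |>.sub_const _ |>.add_const _).congr_deriv
      (by ring)
  exact (((hw.pow 2).const_mul q2).sub (hw.const_mul (κ * p1))
    |>.sub ((hasDerivAt_id' q1).const_mul _)).congr_deriv (by ring)

theorem hasDerivAt_integral_p1 :
    HasDerivAt (fun z => integral t κ q1 z q2 p2)
      (2 * q2 * (p1 * p2 + 3 * q1 ^ 2 - q2 + t) * p2 - κ * (p1 * p2 + 3 * q1 ^ 2 - q2 + t)
        - κ * p1 * p2) p1 := by
  have hp := hasDerivAt_id' p1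
  have hw : HasDerivAt (fun z => z * p2 + 3 * q1 ^ 2 - q2 + t) p2 p1 :=
    (((hp.mul_const p2).add_const _).sub_const _ |>.add_const _).congr_deriv (by ring)
  exact (((hw.pow 2).const_mul q2).sub ((hp.const_mul κ).mul hw) |>.sub_const _).congr_deriv
    (by ring)

theorem hasDerivAt_integral_q2 :
    HasDerivAt (fun z => integral t κ q1 p1 z p2)
      ((p1 * p2 + 3 * q1 ^ 2 - q2 + t) ^ 2 - 2 * q2 * (p1 * p2 + 3 * q1 ^ 2 - q2 + t)
        + κ * p1) q2 := by
  have hq := hasDerivAt_id' q2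
  have hw : HasDerivAt (fun z => p1 * p2 + 3 * q1 ^ 2 - z + t) (-1) q2 :=
    (hq.const_sub _).add_const _
  have hw2 : HasDerivAt (fun z => (p1 * p2 + 3 * q1 ^ 2 - z + t) ^ 2)
      (2 * (p1 * p2 + 3 * q1 ^ 2 - q2 + t) * -1) q2 :=
    (hw.pow 2).congr_deriv (by ring)
  exact ((hq.mul hw2).sub (hw.const_mul (κ * p1)) |>.sub_const _).congr_deriv (by ring)

theorem hasDerivAt_integral_p2 :
    HasDerivAt (fun z => integral t κ q1 p1 q2 z)
      (2 * q2 * (p1 * p2 + 3 * q1 ^ 2 - q2 + t) * p1 - κ * p1 ^ 2) p2 := by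
  have hw : HasDerivAt (fun z => p1 * z + 3 * q1 ^ 2 - q2 + t) p1 p2 :=
    ((((hasDerivAt_id' p2).const_mul p1).add_const _).sub_const _ |>.add_const _).congr_deriv
      (by ring)
  exact (((hw.pow 2).const_mul q2).sub (hw.const_mul (κ * p1)) |>.sub_const _).congr_deriv
    (by ring)

theorem poissonBracket_integral_hamiltonian :
    poissonBracket (integral t κ) (hamiltonian t κ) q1 p1 q2 p2 = 0 := by
  rw [poissonBracket, (hasDerivAt_integral_q1 ..).deriv, (hasDerivAt_integral_p1 ..).deriv,
    (hasDerivAt_integral_q2 ..).deriv, (hasDerivAt_integral_p2 ..).deriv,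
    (hasDerivAt_hamiltonian_q1 ..).deriv, (hasDerivAt_hamiltonian_p1 ..).deriv,
    (hasDerivAt_hamiltonian_q2 ..).deriv, (hasDerivAt_hamiltonian_p2 ..).deriv]
  ring

end MatrixPI

end

/-- The two conserved quantities H and G of the autonomous matrix first Painlevé
equation Poisson-commute: {G,H} = 0. -/
theorem matrix_PI_poisson_commute (t κ : ℂ) :
    let H : ℂ → ℂ → ℂ → ℂ → ℂ := fun q1 p1 q2 p2 =>
      -2 * p2 * (p2 * q2 - κ) + p1 ^ 2 / 2 - 2 * q1 * t
        - 2 * q1 * (q1 ^ 2 - q2) + 4 * q1 * q2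
    let G : ℂ → ℂ → ℂ → ℂ → ℂ := fun q1 p1 q2 p2 =>
      q2 * (p1 * p2 + 3 * q1 ^ 2 - q2 + t) ^ 2
        - κ * p1 * (p1 * p2 + 3 * q1 ^ 2 - q2 + t) - 2 * κ ^ 2 * q1
    ∀ q1 p1 q2 p2 : ℂ,
      (deriv (fun z => G z p1 q2 p2) q1) * (deriv (fun z => H q1 z q2 p2) p1)
        - (deriv (fun z => H z p1 q2 p2) q1) * (deriv (fun z => G q1 z q2 p2) p1)
        + (deriv (fun z => G q1 p1 z p2) q2) * (deriv (fun z => H q1 p1 q2 z) p2)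
        - (deriv (fun z => H q1 p1 z p2) q2) * (deriv (fun z => G q1 p1 q2 z) p2)
        = 0 := by
  intro H G q1 p1 q2 p2
  exact MatrixPI.poissonBracket_integral_hamiltonian t κ q1 p1 q2 p2
end

section
/- With H and G the autonomous matrix first Painlevé conserved quantities (H = −2p₂(p₂q₂−κ) + p₁²/2 − 2q₁t − 2q₁(q₁²−q₂) + 4q₁q₂ and G = q₂(p₁p₂+3q₁²−q₂+t)² − κp₁(p₁p₂+3q₁²−q₂+t) − 2κ²q₁, with κ ≠ 0), the 2×4 Jacobian matrix of (H, G) with respect to (q₁, p₁, q₂, p₂) has rank 2 at some point of ℂ⁴; hence H and G are functionally independent. -/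
/-! At the origin the Jacobian of `(H, G)` has columns `(-2t, -2κ²)` in `q₁` and `(2κ, 0)` in `p₂`,
which are independent as soon as `κ ≠ 0`. -/

theorem deriv_zero_of_eq_cubic {𝕜 : Type*} [NontriviallyNormedField 𝕜] {f : 𝕜 → 𝕜} {c : 𝕜}
    (a b d : 𝕜) (hf : ∀ z, f z = a * z ^ 3 + b * z ^ 2 + c * z + d) : deriv f 0 = c := by
  have hderiv : HasDerivAt (fun z => a * z ^ 3 + b * z ^ 2 + c * z + d)
      (a * (3 * 0 ^ 2) + b * (2 * 0 ^ 1) + c * 1) (0 : 𝕜) := by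
    simpa using ((((hasDerivAt_pow 3 (0 : 𝕜)).const_mul a).add
      ((hasDerivAt_pow 2 (0 : 𝕜)).const_mul b)).add ((hasDerivAt_id (0 : 𝕜)).const_mul c)).add_const d
  rw [funext hf, hderiv.deriv]
  simp

/-- The conserved quantities H, G of the autonomous matrix first Painlevé
equation are functionally independent: at some point of ℂ⁴ their gradients are
linearly independent, i.e. the Jacobian has rank 2. -/
theorem matrix_PI_functionally_independent (t κ : ℂ) (hκ : κ ≠ 0) :
    let H : ℂ → ℂ → ℂ → ℂ → ℂ := fun q1 p1 q2 p2 =>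
      -2 * p2 * (p2 * q2 - κ) + p1 ^ 2 / 2 - 2 * q1 * t
        - 2 * q1 * (q1 ^ 2 - q2) + 4 * q1 * q2
    let G : ℂ → ℂ → ℂ → ℂ → ℂ := fun q1 p1 q2 p2 =>
      q2 * (p1 * p2 + 3 * q1 ^ 2 - q2 + t) ^ 2
        - κ * p1 * (p1 * p2 + 3 * q1 ^ 2 - q2 + t) - 2 * κ ^ 2 * q1
    ∃ q1 p1 q2 p2 : ℂ, ∀ a b : ℂ,
      (a * deriv (fun z => H z p1 q2 p2) q1 + b * deriv (fun z => G z p1 q2 p2) q1 = 0 ∧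
       a * deriv (fun z => H q1 z q2 p2) p1 + b * deriv (fun z => G q1 z q2 p2) p1 = 0 ∧
       a * deriv (fun z => H q1 p1 z p2) q2 + b * deriv (fun z => G q1 p1 z p2) q2 = 0 ∧
       a * deriv (fun z => H q1 p1 q2 z) p2 + b * deriv (fun z => G q1 p1 q2 z) p2 = 0) →
      a = 0 ∧ b = 0 := by
  intro H G
  refine ⟨0, 0, 0, 0, fun a b ⟨hq1, _, _, hp2⟩ => ?_⟩
  have dH_q1 : deriv (fun z => H z 0 0 0) 0 = -2 * t :=
    deriv_zero_of_eq_cubic (-2) 0 0 fun z => by simp only [H]; ring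
  have dG_q1 : deriv (fun z => G z 0 0 0) 0 = -2 * κ ^ 2 :=
    deriv_zero_of_eq_cubic 0 0 0 fun z => by simp only [G]; ring
  have dH_p2 : deriv (fun z => H 0 0 0 z) 0 = 2 * κ :=
    deriv_zero_of_eq_cubic 0 0 0 fun z => by simp only [H]; ring
  have dG_p2 : deriv (fun z => G 0 0 0 z) 0 = 0 :=
    deriv_zero_of_eq_cubic 0 0 0 fun z => by simp only [G]; ring
  rw [dH_p2, dG_p2] at hp2
  obtain rfl : a = 0 := by simpa [hκ] using hp2
  rw [dH_q1, dG_q1] at hq1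
  exact ⟨rfl, by simpa [hκ] using hq1⟩
end
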